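/- arXiv:2311.00554 — 2 statements merged into one kernel-verified Lean document; each statement's English description precedes it below -/
import Mathlib

section
/- For x > 0 define g(x) = (1 − σ(−x))/x where σ(t) = t/(1 − e^{-t}); equivalently g(x) = (1 − x/(e^{x} − 1))/x. Then there is an absolute constant C such that |g'(x)| ≤ C·min{1, 1/x} for all x > 0. -/
/-!
Since `g x = 1/x - 1/(eˣ - 1)` and `eˣ/(eˣ - 1)² = 1/(2 cosh x - 2)`, the derivative is
`g' x = 1/(2 cosh x - 2) - 1/x²`. The bounds `x² ≤ 2 cosh x - 2 ≤ x² + x⁴/2` (the upper one for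
`x² ≤ 2`, from `cosh x ≤ exp (x²/2)`) give `0 ≤ -g' x ≤ 1/x²` everywhere and `-g' x ≤ 1/2` on
`(0, 1]`, so `C = 1` works.
-/

/-- `g(x) = (1 − σ(−x))/x = (1 − x/(eˣ − 1))/x` for `x > 0`. -/
noncomputable def gWeight (x : ℝ) : ℝ := (1 - x / (Real.exp x - 1)) / x

open Real

lemma sq_le_two_mul_cosh_sub_two (x : ℝ) : x ^ 2 ≤ 2 * cosh x - 2 := by
  have hsinh : |x / 2| ≤ |sinh (x / 2)| := by
    rw [abs_sinh]
    exact self_le_sinh_iff.mpr (abs_nonneg _)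
  have hcosh : 2 * cosh x - 2 = 4 * sinh (x / 2) ^ 2 := by
    rw [show x = 2 * (x / 2) by ring, cosh_two_mul, cosh_sq]
    ring_nf
  rw [hcosh]
  nlinarith [sq_le_sq.mpr hsinh]

lemma two_mul_cosh_sub_two_le {x : ℝ} (hx : x ^ 2 ≤ 2) :
    2 * cosh x - 2 ≤ x ^ 2 + x ^ 4 / 2 := by
  have hu : |x ^ 2 / 2| ≤ 1 := by
    rw [abs_of_nonneg (by positivity)]
    linarith
  have hexp := (abs_le.mp (abs_exp_sub_one_sub_id_le hu)).2
  nlinarith [cosh_le_exp_half_sq x]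

lemma exp_div_sq_exp_sub_one (x : ℝ) : exp x / (exp x - 1) ^ 2 = (2 * cosh x - 2)⁻¹ := by
  have hcosh : 2 * cosh x - 2 = (exp x - 1) ^ 2 / exp x := by
    rw [cosh_eq, exp_neg]
    field_simp
    ring
  rw [hcosh, inv_div]

lemma exp_sub_one_ne_zero {x : ℝ} (hx : x ≠ 0) : exp x - 1 ≠ 0 :=
  sub_ne_zero.mpr (mt (exp_eq_one_iff x).mp hx)

lemma gWeight_eq {x : ℝ} (hx : x ≠ 0) : gWeight x = x⁻¹ - (exp x - 1)⁻¹ := by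
  have hexp := exp_sub_one_ne_zero hx
  rw [gWeight]
  field_simp

lemma hasDerivAt_gWeight {x : ℝ} (hx : x ≠ 0) :
    HasDerivAt gWeight ((2 * cosh x - 2)⁻¹ - (x ^ 2)⁻¹) x := by
  have hd : HasDerivAt (fun y ↦ y⁻¹ - (exp y - 1)⁻¹)
      (-(x ^ 2)⁻¹ - -exp x / (exp x - 1) ^ 2) x :=
    (hasDerivAt_inv hx).sub (((hasDerivAt_exp x).sub_const 1).inv (exp_sub_one_ne_zero hx))
  have heq : (fun y ↦ y⁻¹ - (exp y - 1)⁻¹) =ᶠ[nhds x] gWeight :=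
    Filter.mem_of_superset (isOpen_ne.mem_nhds hx) fun y hy ↦ (gWeight_eq hy).symm
  refine (hd.congr_of_eventuallyEq heq.symm).congr_deriv ?_
  rw [← exp_div_sq_exp_sub_one]
  ring

lemma abs_deriv_gWeight {x : ℝ} (hx : x ≠ 0) :
    |deriv gWeight x| = (x ^ 2)⁻¹ - (2 * cosh x - 2)⁻¹ := by
  have hle : (2 * cosh x - 2)⁻¹ ≤ (x ^ 2)⁻¹ :=
    inv_anti₀ (by positivity) (sq_le_two_mul_cosh_sub_two x)
  rw [(hasDerivAt_gWeight hx).deriv, abs_of_nonpos (by linarith), neg_sub]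

lemma abs_deriv_gWeight_le_inv_sq {x : ℝ} (hx : x ≠ 0) : |deriv gWeight x| ≤ (x ^ 2)⁻¹ := by
  have hD : 0 ≤ (2 * cosh x - 2)⁻¹ := inv_nonneg.mpr (by linarith [one_le_cosh x])
  rw [abs_deriv_gWeight hx]
  linarith

lemma abs_deriv_gWeight_le_half {x : ℝ} (hx : x ≠ 0) (hx2 : x ^ 2 ≤ 2) :
    |deriv gWeight x| ≤ 1 / 2 := by
  have hsq : 0 < x ^ 2 := by positivity
  have hlow := sq_le_two_mul_cosh_sub_two x
  have hup := two_mul_cosh_sub_two_le hx2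
  have hD : 0 < 2 * cosh x - 2 := hsq.trans_le hlow
  rw [abs_deriv_gWeight hx, inv_sub_inv hsq.ne' hD.ne', div_le_iff₀ (by positivity)]
  nlinarith [mul_le_mul_of_nonneg_left hlow hsq.le]

theorem stmt4 :
    ∃ C : ℝ, 0 < C ∧ ∀ x : ℝ, 0 < x → |deriv gWeight x| ≤ C * min 1 (1 / x) := by
  refine ⟨1, one_pos, fun x hx ↦ ?_⟩
  rw [one_mul]
  rcases le_or_gt x 1 with hx1 | hx1
  · rw [min_eq_left ((one_le_div hx).mpr hx1)]
    have hx2 : x ^ 2 ≤ 2 := by nlinarith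
    linarith [abs_deriv_gWeight_le_half hx.ne' hx2]
  · rw [min_eq_right ((div_le_one hx).mpr hx1.le)]
    calc |deriv gWeight x| ≤ (x ^ 2)⁻¹ := abs_deriv_gWeight_le_inv_sq hx.ne'
      _ ≤ 1 / x := by
        rw [one_div]
        exact inv_anti₀ hx (by nlinarith)
end

section
/- For ρ > 0, (σ(ρ) − 1)/ρ − 1/2 = (1/2)coth(ρ/2) − 1/ρ, where σ(t) = t/(1 − e^{−t}); moreover this quantity is nonnegative and bounded: 0 ≤ (1/2)coth(ρ/2) − 1/ρ ≤ min{1/2, ρ/12}. -/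
noncomputable def fitSigma (x : ℝ) : ℝ := if x = 0 then 1 else x / (1 - Real.exp (-x))

/-!
With `u = exp (ρ / 2)` both `ρ / (1 - exp (-ρ))` and `coth (ρ / 2) = (u² + 1) / (u² - 1)` are rational
in `u`, which gives the identity. Writing `x = ρ / 2`, the quantity is `(x cosh x - sinh x) / (2 x sinh x)`;
its sign and the bound `ρ / 12` come from `0 ≤ x cosh x - sinh x ≤ (x² / 3) sinh x` for `x ≥ 0`, both
proved by differentiating (each derivative is a nonnegative multiple of the previous quantity).
The bound `1 / 2` is `exp ρ - 1 ≥ ρ`.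
-/

open Real Set

lemma apply_zero_le_of_hasDerivAt_nonneg {f f' : ℝ → ℝ} (hf : ∀ x, HasDerivAt f (f' x) x)
    (hf' : ∀ x, 0 < x → 0 ≤ f' x) {x : ℝ} (hx : 0 ≤ x) : f 0 ≤ f x := by
  have hmono : MonotoneOn f (Ici 0) := by
    refine monotoneOn_of_hasDerivWithinAt_nonneg (convex_Ici 0)
      (fun y _ ↦ (hf y).continuousAt.continuousWithinAt) (fun y _ ↦ (hf y).hasDerivWithinAt) ?_
    rw [interior_Ici]
    exact hf'
  exact hmono self_mem_Ici hx hx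

lemma sinh_le_mul_cosh {x : ℝ} (hx : 0 ≤ x) : sinh x ≤ x * cosh x := by
  have hderiv : ∀ y, HasDerivAt (fun y ↦ y * cosh y - sinh y) (y * sinh y) y := fun y ↦
    (((hasDerivAt_id' y).mul (hasDerivAt_cosh y)).sub (hasDerivAt_sinh y)).congr_deriv (by ring)
  have := apply_zero_le_of_hasDerivAt_nonneg hderiv
    (fun y hy ↦ mul_nonneg hy.le (sinh_nonneg_iff.2 hy.le)) hx
  simp only [sinh_zero, zero_mul, sub_zero] at this
  linarith

lemma mul_cosh_sub_sinh_le {x : ℝ} (hx : 0 ≤ x) :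
    x * cosh x - sinh x ≤ x ^ 2 / 3 * sinh x := by
  have hderiv : ∀ y, HasDerivAt (fun y ↦ y ^ 2 / 3 * sinh y - (y * cosh y - sinh y))
      (y / 3 * (y * cosh y - sinh y)) y := fun y ↦ by
    refine ((((hasDerivAt_pow 2 y).div_const 3).mul (hasDerivAt_sinh y)).sub
      (((hasDerivAt_id' y).mul (hasDerivAt_cosh y)).sub (hasDerivAt_sinh y))).congr_deriv ?_
    push_cast
    ring
  have := apply_zero_le_of_hasDerivAt_nonneg hderiv
    (fun y hy ↦ mul_nonneg (by positivity) (sub_nonneg.2 (sinh_le_mul_cosh hy.le))) hx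
  simp only [sinh_zero, mul_zero, zero_mul, sub_zero] at this
  linarith

lemma one_div_one_sub_exp_neg {t : ℝ} (ht : t ≠ 0) :
    1 / (1 - exp (-t)) = 1 / 2 + 1 / 2 * (cosh (t / 2) / sinh (t / 2)) := by
  set u := exp (t / 2) with hu
  have hu0 : 0 < u := exp_pos _
  have hexp : exp (-t) = (u ^ 2)⁻¹ := by rw [hu, ← exp_nat_mul, ← exp_neg]; ring_nf
  have hu2 : u ^ 2 - 1 ≠ 0 := by
    rw [hu, ← exp_nat_mul, sub_ne_zero, Ne, exp_eq_one_iff]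
    contrapose! ht
    linarith
  rw [hexp, cosh_eq, sinh_eq, ← hu, exp_neg, ← hu]
  field_simp
  ring

lemma one_div_one_sub_exp_neg_le {t : ℝ} (ht : 0 < t) : 1 / (1 - exp (-t)) ≤ 1 + 1 / t := by
  have hexp : t + 1 ≤ exp t := add_one_le_exp t
  have hsub : 0 < exp t - 1 := by linarith
  calc 1 / (1 - exp (-t)) = 1 + 1 / (exp t - 1) := by
        rw [exp_neg]
        field_simp
        ring
    _ ≤ 1 + 1 / t := by gcongr; linarith

lemma half_mul_coth_half_sub_inv {ρ : ℝ} (hρ : 0 < ρ) :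
    1 / 2 * (cosh (ρ / 2) / sinh (ρ / 2)) - 1 / ρ
      = (ρ / 2 * cosh (ρ / 2) - sinh (ρ / 2)) / (ρ * sinh (ρ / 2)) := by
  have : sinh (ρ / 2) ≠ 0 := (sinh_pos_iff.2 (half_pos hρ)).ne'
  field_simp

lemma fitSigma_sub_one_div {ρ : ℝ} (hρ : ρ ≠ 0) :
    (fitSigma ρ - 1) / ρ = 1 / (1 - exp (-ρ)) - 1 / ρ := by
  rw [fitSigma, if_neg hρ, sub_div, div_div_cancel_left' hρ]
  ring

theorem stmt14 :
    ∀ ρ : ℝ, 0 < ρ →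
      (fitSigma ρ - 1) / ρ - 1 / 2
          = (1 / 2) * (Real.cosh (ρ / 2) / Real.sinh (ρ / 2)) - 1 / ρ
      ∧ 0 ≤ (1 / 2) * (Real.cosh (ρ / 2) / Real.sinh (ρ / 2)) - 1 / ρ
      ∧ (1 / 2) * (Real.cosh (ρ / 2) / Real.sinh (ρ / 2)) - 1 / ρ
          ≤ min (1 / 2) (ρ / 12) := by
  intro ρ hρ
  have hx : 0 ≤ ρ / 2 := by positivity
  have hs : 0 < sinh (ρ / 2) := sinh_pos_iff.2 (half_pos hρ)
  have hid : (fitSigma ρ - 1) / ρ - 1 / 2 = 1 / 2 * (cosh (ρ / 2) / sinh (ρ / 2)) - 1 / ρ := by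
    rw [fitSigma_sub_one_div hρ.ne', one_div_one_sub_exp_neg hρ.ne']
    ring
  refine ⟨hid, ?_, le_min ?_ ?_⟩
  · rw [half_mul_coth_half_sub_inv hρ]
    exact div_nonneg (sub_nonneg.2 (sinh_le_mul_cosh hx)) (by positivity)
  · rw [← hid, fitSigma_sub_one_div hρ.ne']
    linarith [one_div_one_sub_exp_neg_le hρ]
  · rw [half_mul_coth_half_sub_inv hρ, div_le_iff₀ (by positivity)]
    nlinarith [mul_cosh_sub_sinh_le hx]
end
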